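/- arXiv:2003.02620 — 2 statements merged into one kernel-verified Lean document; each statement's English description precedes it below -/
import Mathlib

section
/- Generalized dual Cauchy identity for multivariate orthogonal polynomials: let (φ_n)_{n≥0} be any sequence of monic polynomials with deg φ_n = n, and for a partition μ of length ≤ N define Φ_μ(x_1,...,x_N) := det[φ_{μ_j + N - j}(x_i)]_{i,j=1..N} / ∏_{i<j}(x_i - x_j). Then ∏_{i=1}^p ∏_{j=1}^q (t_i - x_j) = ∑_{λ ⊆ (q^p)} (-1)^{|λ̃|} Φ_λ(t_1,...,t_p) Φ_{λ̃}(x_1,...,x_q), where λ̃ = (p-λ'_q, ..., p-λ'_1). -/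
open Finset

/-- The generalized Schur (multivariate orthogonal) polynomial built from a sequence of
polynomials `φ`: `Φ_μ(x) = det[φ_{μ_j+N-j}(x_i)] / ∏_{i<j}(x_i - x_j)`. -/
noncomputable def genSchur (φ : ℕ → Polynomial ℂ) (N : ℕ) (lam : Fin N → ℕ)
    (x : Fin N → ℂ) : ℂ :=
  Matrix.det (Matrix.of fun i j : Fin N => (φ (lam j + (N - 1 - (j : ℕ)))).eval (x i)) /
  Matrix.det (Matrix.of fun i j : Fin N => x i ^ (N - 1 - (j : ℕ)))

/-- `conjP lam j = λ'_{j+1}`, the conjugate partition (0-based column index `j`). -/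
def conjP {p : ℕ} (lam : Fin p → ℕ) (j : ℕ) : ℕ :=
  (Finset.univ.filter fun i : Fin p => j < lam i).card

/-- The complementary partition `λ̃_j = p - λ'_{q+1-j}` (0-based `j : Fin q`). -/
def tildeP (p q : ℕ) (lam : Fin p → ℕ) (j : Fin q) : ℕ :=
  p - conjP lam (q - 1 - (j : ℕ))

/-- Partitions contained in the `p × q` rectangle. -/
def rect (p q : ℕ) : Finset (Fin p → Fin (q + 1)) :=
  Finset.univ.filter fun f => ∀ i j : Fin p, i ≤ j → f j ≤ f i

namespace DC
open Equiv Equiv.Perm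

variable {p q : ℕ}

instance {n m : ℕ} : DecidablePred (StrictMono : (Fin n → Fin m) → Prop) := fun s =>
  decidable_of_iff (∀ a b, a < b → s a < s b) ⟨fun h _ _ hab => h _ _ hab, fun h a b hab => h hab⟩

/-- strictly monotone maps `Fin p → Fin n` -/
def SM (p n : ℕ) : Finset (Fin p → Fin n) := Finset.univ.filter StrictMono

lemma mem_SM {n : ℕ} {s : Fin p → Fin n} : s ∈ SM p n ↔ StrictMono s := by simp [SM]

lemma card_compl_image (s : Fin p → Fin (p + q)) (hs : Function.Injective s) :
    ((Finset.univ.image s)ᶜ : Finset (Fin (p + q))).card = q := by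
  rw [Finset.card_compl, Finset.card_image_of_injective _ hs]
  simp

/-- enumeration of the complement of the range of `s` -/
noncomputable def cEnum (s : Fin p → Fin (p + q)) : Fin q → Fin (p + q) :=
  if h : ((Finset.univ.image s)ᶜ : Finset (Fin (p + q))).card = q
  then ((Finset.univ.image s)ᶜ).orderEmbOfFin h else fun b => Fin.natAdd p b

lemma cEnum_mem (s : Fin p → Fin (p + q)) (hs : Function.Injective s) (b : Fin q) :
    cEnum s b ∈ ((Finset.univ.image s)ᶜ : Finset (Fin (p + q))) := by
  rw [cEnum, dif_pos (card_compl_image s hs)]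
  exact Finset.orderEmbOfFin_mem _ _ b

lemma cEnum_strictMono (s : Fin p → Fin (p + q)) (hs : Function.Injective s) :
    StrictMono (cEnum s) := by
  rw [cEnum, dif_pos (card_compl_image s hs)]
  exact (Finset.orderEmbOfFin _ _).strictMono

lemma cEnum_eq (s : Fin p → Fin (p + q)) (hs : Function.Injective s)
    (g : Fin q → Fin (p + q)) (hg : StrictMono g)
    (hmem : ∀ b, g b ∉ (Finset.univ.image s : Finset (Fin (p + q)))) :
    cEnum s = g := by
  rw [cEnum, dif_pos (card_compl_image s hs)]
  exact (Finset.orderEmbOfFin_unique (card_compl_image s hs)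
    (fun b => Finset.mem_compl.2 (hmem b)) hg).symm

lemma elim_bijective (s : Fin p → Fin (p + q)) (hs : Function.Injective s) :
    Function.Bijective (Sum.elim s (cEnum s)) := by
  rw [Fintype.bijective_iff_injective_and_card]
  constructor
  · intro u v huv
    have hc : Function.Injective (cEnum s) := (cEnum_strictMono s hs).injective
    cases u with
    | inl a => cases v with
      | inl a' => simpa using hs (by simpa using huv)
      | inr b' =>
        exfalso
        have := cEnum_mem s hs b'
        rw [Finset.mem_compl] at this
        exact this (by simp only [Sum.elim_inl, Sum.elim_inr] at huv; rw [← huv]; exact Finset.mem_image_of_mem s (Finset.mem_univ a))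
    | inr b => cases v with
      | inl a' =>
        exfalso
        have := cEnum_mem s hs b
        rw [Finset.mem_compl] at this
        exact this (by simp only [Sum.elim_inl, Sum.elim_inr] at huv; rw [huv]; exact Finset.mem_image_of_mem s (Finset.mem_univ a'))
      | inr b' => simpa using hc (by simpa using huv)
  · simp

noncomputable def esum (s : Fin p → Fin (p + q)) : (Fin p ⊕ Fin q) ≃ Fin (p + q) :=
  if h : Function.Bijective (Sum.elim s (cEnum s)) then Equiv.ofBijective _ h else finSumFinEquiv

lemma esum_inl (s : Fin p → Fin (p + q)) (hs : Function.Injective s) (a : Fin p) :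
    esum s (Sum.inl a) = s a := by
  rw [esum, dif_pos (elim_bijective s hs)]; rfl

lemma esum_inr (s : Fin p → Fin (p + q)) (hs : Function.Injective s) (b : Fin q) :
    esum s (Sum.inr b) = cEnum s b := by
  rw [esum, dif_pos (elim_bijective s hs)]; rfl

/-- the shuffle permutation associated to `s` -/
noncomputable def sperm (s : Fin p → Fin (p + q)) : Equiv.Perm (Fin (p + q)) :=
  (esum s).symm.trans finSumFinEquiv


def keyset (σ : Equiv.Perm (Fin (p + q))) : Finset (Fin (p + q)) :=
  Finset.univ.filter (fun i => ((σ i : ℕ) < p))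

lemma card_lowset : (Finset.univ.filter (fun r : Fin (p + q) => (r : ℕ) < p)).card = p := by
  refine Finset.card_eq_of_bijective (fun i h => ⟨i, by omega⟩) ?_ ?_ ?_
  · intro a ha
    simp only [Finset.mem_filter] at ha
    exact ⟨(a : ℕ), ha.2, by simp⟩
  · intro i h
    simp [h]
  · intro i j hi hj hij
    simpa [Fin.ext_iff] using hij

lemma keyset_card (σ : Equiv.Perm (Fin (p + q))) : (keyset σ).card = p := by
  have h1 : (keyset σ).card
      = (Finset.univ.filter (fun r : Fin (p + q) => (r : ℕ) < p)).card := by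
    apply Finset.card_bij (fun i _ => σ i)
    · intro a ha; simpa [keyset] using (by simpa [keyset] using ha : ((σ a : ℕ) < p))
    · intro a _ b _ hab; exact σ.injective hab
    · intro r hr
      refine ⟨σ.symm r, ?_, by simp⟩
      simp only [keyset, Finset.mem_filter, Finset.mem_univ, true_and, Equiv.apply_symm_apply]
      simpa using hr
  rw [h1, card_lowset]

noncomputable def key (σ : Equiv.Perm (Fin (p + q))) : Fin p → Fin (p + q) :=
  (keyset σ).orderEmbOfFin (keyset_card σ)

lemma key_strictMono (σ : Equiv.Perm (Fin (p + q))) : StrictMono (key σ) :=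
  ((keyset σ).orderEmbOfFin (keyset_card σ)).strictMono

lemma image_key (σ : Equiv.Perm (Fin (p + q))) :
    Finset.univ.image (key σ) = keyset σ := by
  ext i
  simp only [Finset.mem_image, Finset.mem_univ, true_and]
  constructor
  · rintro ⟨a, rfl⟩; exact Finset.orderEmbOfFin_mem _ _ a
  · intro hi
    have := Finset.range_orderEmbOfFin (keyset σ) (keyset_card σ)
    have : i ∈ Set.range (key σ) := by rw [key]; rw [this]; exact hi
    obtain ⟨a, ha⟩ := this
    exact ⟨a, ha⟩

lemma key_eq_iff (σ : Equiv.Perm (Fin (p + q))) (s : Fin p → Fin (p + q)) (hs : StrictMono s) :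
    key σ = s ↔ keyset σ = Finset.univ.image s := by
  constructor
  · intro h; rw [← image_key σ, h]
  · intro h
    refine (Finset.orderEmbOfFin_unique (keyset_card σ) (f := s) ?_ hs).symm
    intro a; rw [h]; exact Finset.mem_image_of_mem s (Finset.mem_univ a)

noncomputable def gee (s : Fin p → Fin (p + q)) (τ : Equiv.Perm (Fin p)) (ρ : Equiv.Perm (Fin q)) :
    Equiv.Perm (Fin (p + q)) :=
  ((esum s).permCongr (Equiv.Perm.sumCongr τ ρ)).trans (sperm s)

lemma sperm_apply_s (s : Fin p → Fin (p + q)) (hs : Function.Injective s) (a : Fin p) :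
    sperm s (s a) = Fin.castAdd q a := by
  have h1 : (esum s).symm (s a) = Sum.inl a := by
    rw [Equiv.symm_apply_eq, esum_inl s hs]
  simp [sperm, h1]

lemma sperm_apply_c (s : Fin p → Fin (p + q)) (hs : Function.Injective s) (b : Fin q) :
    sperm s (cEnum s b) = Fin.natAdd p b := by
  have h1 : (esum s).symm (cEnum s b) = Sum.inr b := by
    rw [Equiv.symm_apply_eq, esum_inr s hs]
  simp [sperm, h1]

lemma gee_apply_s (s : Fin p → Fin (p + q)) (hs : Function.Injective s)
    (τ : Equiv.Perm (Fin p)) (ρ : Equiv.Perm (Fin q)) (a : Fin p) :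
    gee s τ ρ (s a) = Fin.castAdd q (τ a) := by
  have h1 : (esum s).symm (s a) = Sum.inl a := by
    rw [Equiv.symm_apply_eq, esum_inl s hs]
  have h2 : ((esum s).permCongr (Equiv.Perm.sumCongr τ ρ)) (s a) = s (τ a) := by
    simp [Equiv.permCongr_apply, h1, Equiv.Perm.sumCongr_apply, esum_inl s hs]
  simp only [gee, Equiv.trans_apply, h2, sperm_apply_s s hs]

lemma gee_apply_c (s : Fin p → Fin (p + q)) (hs : Function.Injective s)
    (τ : Equiv.Perm (Fin p)) (ρ : Equiv.Perm (Fin q)) (b : Fin q) :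
    gee s τ ρ (cEnum s b) = Fin.natAdd p (ρ b) := by
  have h1 : (esum s).symm (cEnum s b) = Sum.inr b := by
    rw [Equiv.symm_apply_eq, esum_inr s hs]
  have h2 : ((esum s).permCongr (Equiv.Perm.sumCongr τ ρ)) (cEnum s b) = cEnum s (ρ b) := by
    simp [Equiv.permCongr_apply, h1, Equiv.Perm.sumCongr_apply, esum_inr s hs]
  simp only [gee, Equiv.trans_apply, h2, sperm_apply_c s hs]

lemma sign_gee (s : Fin p → Fin (p + q)) (τ : Equiv.Perm (Fin p)) (ρ : Equiv.Perm (Fin q)) :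
    Equiv.Perm.sign (gee s τ ρ)
      = Equiv.Perm.sign (sperm s) * Equiv.Perm.sign τ * Equiv.Perm.sign ρ := by
  have h : gee s τ ρ = (sperm s) * ((esum s).permCongr (Equiv.Perm.sumCongr τ ρ)) := rfl
  rw [h, Equiv.Perm.sign_mul, Equiv.Perm.sign_permCongr, Equiv.Perm.sign_sumCongr, mul_assoc]

noncomputable def splitP (s : Fin p → Fin (p + q)) (hs : Function.Injective s)
    (σ : Equiv.Perm (Fin (p + q))) (h : ∀ a, ((σ (s a) : ℕ) < p)) : Equiv.Perm (Fin p) :=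
  Equiv.ofBijective (fun a => (⟨(σ (s a) : ℕ), h a⟩ : Fin p))
    (Finite.injective_iff_bijective.1 (fun a b hab =>
      hs (σ.injective (Fin.ext (by simpa [Fin.ext_iff] using hab)))))

noncomputable def splitQ (s : Fin p → Fin (p + q)) (hs : Function.Injective s)
    (σ : Equiv.Perm (Fin (p + q))) (h : ∀ b, p ≤ ((σ (cEnum s b) : ℕ))) : Equiv.Perm (Fin q) :=
  Equiv.ofBijective
    (fun b => (⟨(σ (cEnum s b) : ℕ) - p, by have := (σ (cEnum s b)).isLt; have := h b; omega⟩ : Fin q))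
    (Finite.injective_iff_bijective.1 (fun a b hab => by
      apply (cEnum_strictMono s hs).injective
      apply σ.injective
      apply Fin.ext
      have h1 := h a; have h2 := h b
      simp only [Fin.mk.injEq] at hab
      omega))

theorem laplace (M : Matrix (Fin (p + q)) (Fin (p + q)) ℂ) :
    M.det = ∑ s ∈ SM p (p + q),
      ((Equiv.Perm.sign (sperm s) : ℤ) : ℂ)
        * (M.submatrix (Fin.castAdd q) s).det
        * (M.submatrix (Fin.natAdd p) (cEnum s)).det := by
  rw [Matrix.det_apply']
  rw [← Finset.sum_fiberwise_of_maps_to (g := key) (t := SM p (p + q))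
    (fun σ _ => mem_SM.2 (key_strictMono σ))
    (fun σ => ((Equiv.Perm.sign σ : ℤ) : ℂ) * ∏ i, M (σ i) i)]
  refine Finset.sum_congr rfl (fun s hs => ?_)
  have hsm : StrictMono s := mem_SM.1 hs
  have hsi : Function.Injective s := hsm.injective
  have hfib : ∀ σ : Equiv.Perm (Fin (p + q)), key σ = s →
      (∀ a, ((σ (s a) : ℕ) < p)) ∧ (∀ b, p ≤ ((σ (cEnum s b) : ℕ))) := by
    intro σ hσ
    have hks : keyset σ = Finset.univ.image s := (key_eq_iff σ s hsm).1 hσ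
    constructor
    · intro a
      have h1 : s a ∈ keyset σ := by
        rw [hks]; exact Finset.mem_image_of_mem s (Finset.mem_univ a)
      simpa [keyset] using h1
    · intro b
      have h1 : cEnum s b ∉ keyset σ := by
        rw [hks]; exact Finset.mem_compl.1 (cEnum_mem s hsi b)
      simp only [keyset, Finset.mem_filter, Finset.mem_univ, true_and, not_lt] at h1
      exact h1
  have hkg : ∀ (τ : Equiv.Perm (Fin p)) (ρ : Equiv.Perm (Fin q)), key (gee s τ ρ) = s := by
    intro τ ρ
    rw [key_eq_iff _ s hsm]
    ext i
    simp only [keyset, Finset.mem_filter, Finset.mem_univ, true_and, Finset.mem_image]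
    obtain ⟨u, rfl⟩ := (esum s).surjective i
    cases u with
    | inl a =>
      rw [esum_inl s hsi a, gee_apply_s s hsi]
      simp only [Fin.coe_castAdd]
      exact ⟨fun _ => ⟨a, rfl⟩, fun _ => (τ a).isLt⟩
    | inr b =>
      rw [esum_inr s hsi b, gee_apply_c s hsi]
      simp only [Fin.coe_natAdd]
      constructor
      · intro h; omega
      · rintro ⟨a, ha⟩
        exfalso
        have := Finset.mem_compl.1 (cEnum_mem s hsi b)
        exact this (ha ▸ Finset.mem_image_of_mem s (Finset.mem_univ a))
  -- rewrite the right hand side as a double sum over pairs of permutations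
  have hrhs : ((Equiv.Perm.sign (sperm s) : ℤ) : ℂ)
        * (M.submatrix (Fin.castAdd q) s).det
        * (M.submatrix (Fin.natAdd p) (cEnum s)).det
      = ∑ τρ : Equiv.Perm (Fin p) × Equiv.Perm (Fin q),
          ((Equiv.Perm.sign (gee s τρ.1 τρ.2) : ℤ) : ℂ)
            * ((∏ a, M (Fin.castAdd q (τρ.1 a)) (s a))
               * ∏ b, M (Fin.natAdd p (τρ.2 b)) (cEnum s b)) := by
    rw [Matrix.det_apply', Matrix.det_apply', Fintype.sum_prod_type, mul_assoc,
      Finset.sum_mul_sum, Finset.mul_sum]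
    refine Finset.sum_congr rfl (fun τ _ => ?_)
    rw [Finset.mul_sum]
    refine Finset.sum_congr rfl (fun ρ _ => ?_)
    rw [sign_gee]
    push_cast
    simp only [Matrix.submatrix_apply]
    ring
  rw [hrhs]
  refine Finset.sum_bij'
    (i := fun σ hσ => (splitP s hsi σ (hfib σ (by simpa using hσ)).1,
                       splitQ s hsi σ (hfib σ (by simpa using hσ)).2))
    (j := fun τρ _ => gee s τρ.1 τρ.2) ?_ ?_ ?_ ?_ ?_
  · intro σ hσ; exact Finset.mem_univ _
  · intro τρ _
    simp only [Finset.mem_filter, Finset.mem_univ, true_and]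
    exact hkg τρ.1 τρ.2
  · -- left inverse : gee of split = σ
    intro σ hσ
    have h1 := (hfib σ (by simpa using hσ)).1
    have h2 := (hfib σ (by simpa using hσ)).2
    apply Equiv.ext
    intro i
    obtain ⟨u, rfl⟩ := (esum s).surjective i
    cases u with
    | inl a =>
      rw [esum_inl s hsi a, gee_apply_s s hsi]
      apply Fin.ext
      simp [splitP]
    | inr b =>
      rw [esum_inr s hsi b, gee_apply_c s hsi]
      apply Fin.ext
      have := h2 b
      simp only [Fin.coe_natAdd]
      simp only [splitQ, Equiv.ofBijective_apply]
      omega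
  · -- right inverse
    intro τρ _
    have h1 := (hfib _ (hkg τρ.1 τρ.2)).1
    have h2 := (hfib _ (hkg τρ.1 τρ.2)).2
    refine Prod.ext ?_ ?_
    · apply Equiv.ext; intro a
      apply Fin.ext
      simp [splitP, gee_apply_s s hsi]
    · apply Equiv.ext; intro b
      apply Fin.ext
      simp [splitQ, gee_apply_c s hsi]
  · -- summand equality
    intro σ hσ
    have h1 := (hfib σ (by simpa using hσ)).1
    have h2 := (hfib σ (by simpa using hσ)).2
    show ((Equiv.Perm.sign σ : ℤ) : ℂ) * ∏ i, M (σ i) i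
      = ((Equiv.Perm.sign (gee s (splitP s hsi σ h1) (splitQ s hsi σ h2)) : ℤ) : ℂ)
        * ((∏ a, M (Fin.castAdd q (splitP s hsi σ h1 a)) (s a))
           * ∏ b, M (Fin.natAdd p (splitQ s hsi σ h2 b)) (cEnum s b))
    set τ := splitP s hsi σ h1 with hτ
    set ρ := splitQ s hsi σ h2 with hρ
    have hσg : gee s τ ρ = σ := by
      apply Equiv.ext
      intro i
      obtain ⟨u, rfl⟩ := (esum s).surjective i
      cases u with
      | inl a =>
        rw [esum_inl s hsi a, gee_apply_s s hsi]
        apply Fin.ext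
        simp [hτ, splitP]
      | inr b =>
        rw [esum_inr s hsi b, gee_apply_c s hsi]
        apply Fin.ext
        have := h2 b
        simp only [Fin.coe_natAdd]
        simp only [hρ, splitQ, Equiv.ofBijective_apply]
        omega
    have hprod : (∏ i, M (σ i) i)
        = (∏ a, M (Fin.castAdd q (τ a)) (s a)) * ∏ b, M (Fin.natAdd p (ρ b)) (cEnum s b) := by
      rw [← hσg]
      rw [← Equiv.prod_comp (esum s) (fun i => M (gee s τ ρ i) i)]
      rw [Fintype.prod_sum_type]
      congr 1
      · exact Finset.prod_congr rfl (fun a _ => by rw [esum_inl s hsi a, gee_apply_s s hsi])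
      · exact Finset.prod_congr rfl (fun b _ => by rw [esum_inr s hsi b, gee_apply_c s hsi])
    rw [hσg, hprod]

lemma sm_le {m n : ℕ} {s : Fin m → Fin n} (hs : StrictMono s) :
    ∀ (d : ℕ) (a b : Fin m), (a : ℕ) + d = (b : ℕ) → (s a : ℕ) + d ≤ (s b : ℕ) := by
  intro d
  induction d with
  | zero =>
    intro a b h
    have : a = b := Fin.ext (by omega)
    subst this; omega
  | succ d ih =>
    intro a b h
    have hb : ((a : ℕ) + d) < m := by have := b.isLt; omega
    have h1 := ih a ⟨(a : ℕ) + d, hb⟩ rfl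
    have h2 : (⟨(a : ℕ) + d, hb⟩ : Fin m) < b := by rw [Fin.lt_def]; simp; omega
    have h3 := hs h2
    rw [Fin.lt_def] at h3
    simp at h1 h3
    omega

lemma sm_ge_self {m n : ℕ} {s : Fin m → Fin n} (hs : StrictMono s) (b : Fin m) :
    (b : ℕ) ≤ (s b : ℕ) := by
  have hz : (0 : ℕ) < m := by have := b.isLt; omega
  have := sm_le hs (b : ℕ) ⟨0, hz⟩ b (by simp)
  omega

lemma sm_upper {s : Fin p → Fin (p + q)} (hs : StrictMono s) (b : Fin p) :
    (s b : ℕ) ≤ (b : ℕ) + q := by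
  have hb := b.isLt
  have hlast : ((b : ℕ) + (p - 1 - (b : ℕ))) < p := by omega
  have h1 := sm_le hs (p - 1 - (b : ℕ)) b ⟨(b : ℕ) + (p - 1 - (b : ℕ)), hlast⟩ (by simp)
  have h2 := (s ⟨(b : ℕ) + (p - 1 - (b : ℕ)), hlast⟩).isLt
  omega

theorem sign_sperm_aux : ∀ (n : ℕ) (s : Fin p → Fin (p + q)) (_ : StrictMono s),
    (∑ b : Fin p, ((s b : ℕ) - (b : ℕ))) = n →
    Equiv.Perm.sign (sperm s) = (-1 : ℤˣ) ^ n := by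
  intro n
  induction n with
  | zero =>
    intro s hs h0
    have hb : ∀ b : Fin p, (s b : ℕ) = (b : ℕ) := by
      intro b
      have hge := sm_ge_self hs b
      have hz := Finset.sum_eq_zero_iff.1 h0 b (Finset.mem_univ b)
      omega
    have hc : cEnum s = fun b => Fin.natAdd p b := by
      apply cEnum_eq s hs.injective
      · intro a b hab
        rw [Fin.lt_def] at hab ⊢
        simpa using hab
      · intro b hmem
        rw [Finset.mem_image] at hmem
        obtain ⟨a, _, ha⟩ := hmem
        have h1 : (s a : ℕ) = (Fin.natAdd p b : ℕ) := by rw [ha]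
        rw [hb a] at h1
        simp at h1
        have := a.isLt
        omega
    have he : esum s = finSumFinEquiv := by
      apply Equiv.ext
      intro u
      cases u with
      | inl a =>
        rw [esum_inl s hs.injective]
        apply Fin.ext
        simp [hb a]
      | inr b =>
        rw [esum_inr s hs.injective, hc]
        simp
    rw [sperm, he]
    simp
  | succ n ih =>
    intro s hs hsum
    -- there is a position where s jumps
    have hex : ∃ b : Fin p, (b : ℕ) < (s b : ℕ) := by
      by_contra hno
      push_neg at hno
      have : ∀ b : Fin p, ((s b : ℕ) - (b : ℕ)) = 0 := fun b => by
        have := hno b; omega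
      rw [Finset.sum_congr rfl (fun b _ => this b), Finset.sum_const_zero] at hsum
      omega
    set T : Finset (Fin p) := Finset.univ.filter (fun b => (b : ℕ) < (s b : ℕ)) with hT
    have hTne : T.Nonempty := by
      obtain ⟨b, hbb⟩ := hex
      exact ⟨b, by simp [hT, hbb]⟩
    set b0 := T.min' hTne with hb0
    have hb0mem : (b0 : ℕ) < (s b0 : ℕ) := by
      have := T.min'_mem hTne
      simpa [hT] using this
    have hmin : ∀ c : Fin p, c < b0 → (s c : ℕ) = (c : ℕ) := by
      intro c hc
      have hnotT : c ∉ T := fun hcT => absurd (T.min'_le c hcT) (not_le.2 hc)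
      have : ¬ ((c : ℕ) < (s c : ℕ)) := fun hlt => hnotT (by simp [hT, hlt])
      have := sm_ge_self hs c
      omega
    -- define a and the swap
    have hapos : 1 ≤ (s b0 : ℕ) := by omega
    set bv : Fin (p + q) := s b0 with hbv
    set a : Fin (p + q) := ⟨(bv : ℕ) - 1, by have := bv.isLt; omega⟩ with ha
    have haval : (a : ℕ) + 1 = (bv : ℕ) := by simp [ha]; omega
    have hage : (b0 : ℕ) ≤ (a : ℕ) := by
      have : (b0 : ℕ) + 1 ≤ (bv : ℕ) := hb0mem
      omega
    have hane : a ≠ bv := by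
      intro h
      have : (a : ℕ) = (bv : ℕ) := by rw [h]
      omega
    have hanotim : ∀ c : Fin p, s c ≠ a := by
      intro c hc
      rcases lt_trichotomy c b0 with h | h | h
      · have h1 := hmin c h
        have h2 : (c : ℕ) < (b0 : ℕ) := h
        have : (s c : ℕ) = (a : ℕ) := by rw [hc]
        omega
      · subst h
        rw [hc] at hbv
        exact hane hbv.symm
      · have := hs h
        rw [Fin.lt_def] at this
        have : (a : ℕ) < (s c : ℕ) → False := by
          intro
          have : (s c : ℕ) = (a : ℕ) := by rw [hc]
          omega
        have hgt : (bv : ℕ) < (s c : ℕ) := by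
          have := hs (show b0 < c from h)
          rw [Fin.lt_def] at this
          exact this
        have : (s c : ℕ) = (a : ℕ) := by rw [hc]
        omega
    set s' : Fin p → Fin (p + q) := fun c => if c = b0 then a else s c with hs'
    have hs'b0 : s' b0 = a := by simp [hs']
    have hs'ne : ∀ c, c ≠ b0 → s' c = s c := fun c hc => by simp [hs', hc]
    have hs'mono : StrictMono s' := by
      intro c d hcd
      rcases eq_or_ne c b0 with rfl | hcb
      · have hdb : d ≠ b0 := fun h => by rw [h] at hcd; exact lt_irrefl _ hcd
        rw [hs'b0, hs'ne d hdb, Fin.lt_def]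
        have := hs hcd
        rw [Fin.lt_def] at this
        omega
      · rcases eq_or_ne d b0 with rfl | hdb
        · rw [hs'b0, hs'ne c hcb, Fin.lt_def]
          have := hmin c hcd
          have : (c : ℕ) < (b0 : ℕ) := hcd
          have h1 := hmin c hcd
          omega
        · rw [hs'ne c hcb, hs'ne d hdb]
          exact hs hcd
    have hsum' : (∑ b : Fin p, ((s' b : ℕ) - (b : ℕ))) = n := by
      rw [← Finset.add_sum_erase _ _ (Finset.mem_univ b0)] at hsum ⊢
      have herase : ∑ b ∈ Finset.univ.erase b0, ((s' b : ℕ) - (b : ℕ))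
          = ∑ b ∈ Finset.univ.erase b0, ((s b : ℕ) - (b : ℕ)) := by
        refine Finset.sum_congr rfl (fun b hb => ?_)
        rw [hs'ne b (Finset.ne_of_mem_erase hb)]
      rw [herase, hs'b0]
      have : (a : ℕ) = (s b0 : ℕ) - 1 := by simp [ha, hbv]
      omega
    have hbnotim' : ∀ c : Fin p, s' c ≠ bv := by
      intro c hc
      rcases eq_or_ne c b0 with rfl | hcb
      · rw [hs'b0] at hc; exact hane hc
      · rw [hs'ne c hcb] at hc
        exact hcb (hs.injective (hc.trans hbv))
    have haim' : s' b0 = a := hs'b0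
    -- cEnum s is the swap of cEnum s'
    have hswap_s : ∀ c : Fin p, s c = Equiv.swap a bv (s' c) := by
      intro c
      rcases eq_or_ne c b0 with rfl | hcb
      · rw [hs'b0, Equiv.swap_apply_left, hbv]
      · rw [hs'ne c hcb, Equiv.swap_apply_of_ne_of_ne (hanotim c) ?h1]
        case h1 => intro h; exact hcb (hs.injective (h.trans hbv))
    have hc'ne_a : ∀ k : Fin q, cEnum s' k ≠ a := by
      intro k h
      have hmem := cEnum_mem s' hs'mono.injective k
      rw [Finset.mem_compl] at hmem
      apply hmem
      rw [h, ← haim']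
      exact Finset.mem_image_of_mem s' (Finset.mem_univ b0)
    have hcEnum : cEnum s = fun k => Equiv.swap a bv (cEnum s' k) := by
      apply cEnum_eq s hs.injective
      · -- strict mono
        intro k l hkl
        show Equiv.swap a bv (cEnum s' k) < Equiv.swap a bv (cEnum s' l)
        have hmono := cEnum_strictMono s' hs'mono.injective hkl
        rcases eq_or_ne (cEnum s' k) bv with hk | hk
        · rw [hk, Equiv.swap_apply_right]
          have hlb : cEnum s' l ≠ bv := by
            intro h; exact (ne_of_gt (h ▸ hk ▸ hmono)) rfl
          rw [Equiv.swap_apply_of_ne_of_ne (hc'ne_a l) hlb, Fin.lt_def]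
          have : (bv : ℕ) < (cEnum s' l : ℕ) := by
            rw [← hk]; exact hmono
          omega
        · rcases eq_or_ne (cEnum s' l) bv with hl | hl
          · rw [hl, Equiv.swap_apply_right, Equiv.swap_apply_of_ne_of_ne (hc'ne_a k) hk,
              Fin.lt_def]
            have h1 : (cEnum s' k : ℕ) < (bv : ℕ) := by rw [← hl]; exact hmono
            have h2 : (cEnum s' k : ℕ) ≠ (a : ℕ) := fun h =>
              (hc'ne_a k) (Fin.ext h)
            omega
          · rw [Equiv.swap_apply_of_ne_of_ne (hc'ne_a k) hk,
              Equiv.swap_apply_of_ne_of_ne (hc'ne_a l) hl]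
            exact hmono
      · -- lands outside image s
        intro k hmem
        rw [Finset.mem_image] at hmem
        obtain ⟨c, _, hcim⟩ := hmem
        rw [hswap_s c] at hcim
        have := (Equiv.swap a bv).injective hcim
        have hmem2 := cEnum_mem s' hs'mono.injective k
        rw [Finset.mem_compl] at hmem2
        exact hmem2 (this ▸ Finset.mem_image_of_mem s' (Finset.mem_univ c))
    have hesum : esum s = (esum s').trans (Equiv.swap a bv) := by
      apply Equiv.ext
      intro u
      cases u with
      | inl c =>
        rw [Equiv.trans_apply, esum_inl s hs.injective, esum_inl s' hs'mono.injective,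
          hswap_s c]
      | inr k =>
        rw [Equiv.trans_apply, esum_inr s hs.injective, esum_inr s' hs'mono.injective,
          hcEnum]
    have hsperm : sperm s = (sperm s') * (Equiv.swap a bv) := by
      apply Equiv.ext
      intro i
      simp only [sperm, hesum, Equiv.Perm.mul_apply, Equiv.trans_apply, Equiv.symm_apply_apply,
        Equiv.symm_trans_apply, Equiv.symm_symm, Equiv.swap_apply_self]
      rfl
    rw [hsperm, Equiv.Perm.sign_mul, ih s' hs'mono hsum', Equiv.Perm.sign_swap hane,
      pow_succ]

theorem sign_sperm (s : Fin p → Fin (p + q)) (hs : StrictMono s) :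
    ((Equiv.Perm.sign (sperm s) : ℤ) : ℂ) = (-1 : ℂ) ^ (∑ b : Fin p, ((s b : ℕ) - (b : ℕ))) := by
  rw [sign_sperm_aux _ s hs rfl]
  push_cast
  ring

end DC

namespace DC
open Equiv Equiv.Perm

variable {p q : ℕ}

lemma conjP_le (lam : Fin p → ℕ) (k : ℕ) : conjP lam k ≤ p := by
  have := Finset.card_filter_le (Finset.univ : Finset (Fin p)) (fun i => k < lam i)
  simpa [conjP] using this

lemma conjP_anti (lam : Fin p → ℕ) {k l : ℕ} (h : k ≤ l) : conjP lam l ≤ conjP lam k := by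
  apply Finset.card_le_card
  intro i hi
  simp only [Finset.mem_filter] at hi ⊢
  exact ⟨hi.1, lt_of_le_of_lt h hi.2⟩

lemma card_lt_filter {n m : ℕ} (hm : m ≤ n) :
    (Finset.univ.filter fun c : Fin n => (c : ℕ) < m).card = m := by
  refine Finset.card_eq_of_bijective (fun i h => ⟨i, by omega⟩) ?_ ?_ ?_
  · intro a ha
    simp only [Finset.mem_filter] at ha
    exact ⟨(a : ℕ), ha.2, by simp⟩
  · intro i h
    simp [h]
  · intro i j hi hj hij
    simpa [Fin.ext_iff] using hij

lemma conj_lt_iff {lam : Fin p → ℕ} (hant : ∀ i j : Fin p, i ≤ j → lam j ≤ lam i)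
    (j : Fin p) (k : ℕ) : (j : ℕ) < conjP lam k ↔ k < lam j := by
  constructor
  · intro h
    by_contra hle
    push_neg at hle
    have hsub : (Finset.univ.filter fun i : Fin p => k < lam i) ⊆ Finset.Iio j := by
      intro i hi
      simp only [Finset.mem_filter] at hi
      rw [Finset.mem_Iio]
      by_contra hji
      push_neg at hji
      have := hant j i hji
      omega
    have := Finset.card_le_card hsub
    rw [Fin.card_Iio] at this
    rw [conjP] at h
    omega
  · intro h
    have hsub : Finset.Iic j ⊆ (Finset.univ.filter fun i : Fin p => k < lam i) := by
      intro i hi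
      rw [Finset.mem_Iic] at hi
      simp only [Finset.mem_filter, Finset.mem_univ, true_and]
      have := hant i j hi
      omega
    have := Finset.card_le_card hsub
    rw [Fin.card_Iic] at this
    rw [conjP]
    omega

/-- the increasing enumeration attached to a partition in the rectangle -/
def sOf (f : Fin p → Fin (q + 1)) : Fin p → Fin (p + q) :=
  fun b => ⟨(b : ℕ) + (f b.rev : ℕ), by
    have h1 := b.isLt
    have h2 := (f b.rev).isLt
    omega⟩

/-- the increasing enumeration of the complement -/
def cOf (lam : Fin p → ℕ) : Fin q → Fin (p + q) :=
  fun k => ⟨(k : ℕ) + (p - conjP lam (k : ℕ)), by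
    have h1 := k.isLt
    have h2 := conjP_le lam (k : ℕ)
    omega⟩

lemma sOf_strictMono {f : Fin p → Fin (q + 1)}
    (hant : ∀ i j : Fin p, i ≤ j → f j ≤ f i) : StrictMono (sOf f) := by
  intro b c hbc
  have hrev : c.rev ≤ b.rev := by
    rw [Fin.le_def, Fin.val_rev, Fin.val_rev]
    have := hbc
    rw [Fin.lt_def] at this
    have := b.isLt; have := c.isLt
    omega
  have := hant c.rev b.rev hrev
  rw [Fin.le_def] at this
  rw [Fin.lt_def]
  simp only [sOf]
  rw [Fin.lt_def] at hbc
  omega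

lemma cOf_strictMono (lam : Fin p → ℕ) : StrictMono (cOf lam : Fin q → Fin (p + q)) := by
  intro k l hkl
  rw [Fin.lt_def] at hkl ⊢
  have h1 : conjP lam (l : ℕ) ≤ conjP lam (k : ℕ) := conjP_anti lam (le_of_lt hkl)
  have h2 := conjP_le lam (l : ℕ)
  have h3 := conjP_le lam (k : ℕ)
  simp only [cOf]
  omega

lemma sOf_ne_cOf {f : Fin p → Fin (q + 1)}
    (hant : ∀ i j : Fin p, i ≤ j → f j ≤ f i) (b : Fin p) (k : Fin q) :
    sOf f b ≠ cOf (fun i => (f i : ℕ)) k := by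
  have hant' : ∀ i j : Fin p, i ≤ j → (f j : ℕ) ≤ (f i : ℕ) := by
    intro i j hij
    have := hant i j hij
    rw [Fin.le_def] at this
    exact this
  intro h
  have hval : (b : ℕ) + ((f b.rev : ℕ))
      = (k : ℕ) + (p - conjP (fun i => (f i : ℕ)) (k : ℕ)) := by
    have h' : ((sOf f b : Fin (p + q)) : ℕ) = ((cOf (fun i => (f i : ℕ)) k : Fin (p + q)) : ℕ) := by
      rw [h]
    exact h'
  have hj3 : (b : ℕ) + 1 + (b.rev : ℕ) = p := by
    rw [Fin.val_rev]; have := b.isLt; omega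
  have hdual := conj_lt_iff (lam := fun i => (f i : ℕ)) hant' b.rev (k : ℕ)
  have hc := conjP_le (fun i => (f i : ℕ)) (k : ℕ)
  rcases lt_or_ge (k : ℕ) ((f b.rev : ℕ)) with hcase | hcase
  · have hlt := hdual.2 hcase
    omega
  · have hnlt : ¬ (((b.rev : Fin p) : ℕ) < conjP (fun i => (f i : ℕ)) (k : ℕ)) :=
      fun hh => absurd (hdual.1 hh) (not_lt.2 hcase)
    omega

lemma cEnum_sOf {f : Fin p → Fin (q + 1)}
    (hant : ∀ i j : Fin p, i ≤ j → f j ≤ f i) :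
    cEnum (sOf f) = cOf (fun i => (f i : ℕ)) := by
  apply cEnum_eq _ (sOf_strictMono hant).injective
  · exact cOf_strictMono _
  · intro k hmem
    rw [Finset.mem_image] at hmem
    obtain ⟨b, _, hb⟩ := hmem
    exact sOf_ne_cOf hant b k hb

lemma sum_sOf {f : Fin p → Fin (q + 1)} :
    (∑ b : Fin p, ((sOf f b : ℕ) - (b : ℕ))) = ∑ i : Fin p, (f i : ℕ) := by
  have h1 : ∀ b : Fin p, ((sOf f b : ℕ) - (b : ℕ)) = (f b.rev : ℕ) := by
    intro b; simp [sOf]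
  rw [Finset.sum_congr rfl (fun b _ => h1 b)]
  exact Equiv.sum_comp (Equiv.mk Fin.rev Fin.rev Fin.rev_rev Fin.rev_rev) (fun i => (f i : ℕ))

lemma sum_conjP {lam : Fin p → ℕ} (hb : ∀ i, lam i ≤ q) :
    (∑ k : Fin q, conjP lam (k : ℕ)) = ∑ i : Fin p, lam i := by
  have h1 : ∀ k : Fin q, conjP lam (k : ℕ)
      = ∑ i : Fin p, if (k : ℕ) < lam i then 1 else 0 := by
    intro k
    rw [conjP, Finset.card_filter]
  rw [Finset.sum_congr rfl (fun k _ => h1 k), Finset.sum_comm]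
  refine Finset.sum_congr rfl (fun i _ => ?_)
  rw [← Finset.card_filter]
  exact card_lt_filter (hb i)

lemma sum_tildeP {lam : Fin p → ℕ} (hb : ∀ i, lam i ≤ q) :
    (∑ k : Fin q, tildeP p q lam k) + ∑ i : Fin p, lam i = p * q := by
  have h1 : ∀ k : Fin q, tildeP p q lam k = p - conjP lam ((Fin.rev k : Fin q) : ℕ) := by
    intro k
    rw [tildeP, Fin.val_rev]
    congr 2
    omega
  have h2 : (∑ k : Fin q, (p - conjP lam ((Fin.rev k : Fin q) : ℕ)))
      = ∑ k : Fin q, (p - conjP lam (k : ℕ)) :=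
    Equiv.sum_comp (Equiv.mk Fin.rev Fin.rev Fin.rev_rev Fin.rev_rev)
      (fun k : Fin q => p - conjP lam (k : ℕ))
  rw [Finset.sum_congr rfl (fun k _ => h1 k), h2, ← sum_conjP hb, ← Finset.sum_add_distrib]
  have h3 : ∀ k : Fin q, (p - conjP lam (k : ℕ)) + conjP lam (k : ℕ) = p := by
    intro k
    have := conjP_le lam (k : ℕ)
    omega
  rw [Finset.sum_congr rfl (fun k _ => h3 k), Finset.sum_const, Finset.card_univ]
  simp [mul_comm]

end DC

namespace DC
open Equiv Equiv.Perm

variable {p q : ℕ}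

def revE (n : ℕ) : Equiv.Perm (Fin n) := ⟨Fin.rev, Fin.rev, Fin.rev_rev, Fin.rev_rev⟩

lemma sign_cast_sq (σ : Equiv.Perm (Fin p)) :
    ((Equiv.Perm.sign σ : ℤ) : ℂ) * ((Equiv.Perm.sign σ : ℤ) : ℂ) = 1 := by
  have h : (Equiv.Perm.sign σ) * (Equiv.Perm.sign σ) = 1 := Int.units_mul_self _
  have h2 : ((Equiv.Perm.sign σ : ℤ)) * ((Equiv.Perm.sign σ : ℤ)) = 1 := by
    rw [← Units.val_mul, h, Units.val_one]
  calc ((Equiv.Perm.sign σ : ℤ) : ℂ) * ((Equiv.Perm.sign σ : ℤ) : ℂ)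
      = (((Equiv.Perm.sign σ : ℤ) * (Equiv.Perm.sign σ : ℤ) : ℤ) : ℂ) := by push_cast; ring
    _ = 1 := by rw [h2]; norm_num

lemma sign_cast_ne_zero (σ : Equiv.Perm (Fin p)) :
    ((Equiv.Perm.sign σ : ℤ) : ℂ) ≠ 0 := by
  intro h
  have := sign_cast_sq σ
  rw [h, mul_zero] at this
  exact zero_ne_one this

lemma det_pow_rev {n : ℕ} (v : Fin n → ℂ) :
    Matrix.det (Matrix.of fun i j : Fin n => v i ^ (n - 1 - (j : ℕ)))
      = ((Equiv.Perm.sign (revE n) : ℤ) : ℂ) * (Matrix.vandermonde v).det := by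
  have h : (Matrix.of fun i j : Fin n => v i ^ (n - 1 - (j : ℕ)))
      = (Matrix.vandermonde v).submatrix id (revE n) := by
    ext i j
    simp only [Matrix.of_apply, Matrix.submatrix_apply, Matrix.vandermonde, id, revE,
      Equiv.coe_fn_mk, Matrix.of_apply]
    rw [Fin.val_rev]
    congr 1
    omega
  rw [h]
  exact Matrix.det_permute' (revE n) (Matrix.vandermonde v)

lemma vdm_append (t : Fin p → ℂ) (x : Fin q → ℂ) :
    (Matrix.vandermonde (Fin.append t x)).det
      = (Matrix.vandermonde t).det * (Matrix.vandermonde x).det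
        * ∏ a : Fin p, ∏ b : Fin q, (x b - t a) := by
  rw [Matrix.det_vandermonde, Matrix.det_vandermonde, Matrix.det_vandermonde]
  rw [← Equiv.prod_comp finSumFinEquiv
    (fun i : Fin (p + q) => ∏ j ∈ Finset.Ioi i, (Fin.append t x j - Fin.append t x i))]
  rw [Fintype.prod_sum_type]
  have hioi : ∀ i : Fin (p + q), ∀ h : ℂ → ℂ,
      (∏ j ∈ Finset.Ioi i, h (Fin.append t x j))
        = (∏ a' : Fin p, if i < Fin.castAdd q a' then h (t a') else 1)
          * ∏ b' : Fin q, if i < Fin.natAdd p b' then h (x b') else 1 := by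
    intro i h
    have h1 : Finset.Ioi i = Finset.univ.filter (fun j => i < j) := by
      ext j; simp
    rw [h1, Finset.prod_filter]
    rw [← Equiv.prod_comp finSumFinEquiv
      (fun j : Fin (p + q) => if i < j then h (Fin.append t x j) else 1)]
    rw [Fintype.prod_sum_type]
    congr 1
    · refine Finset.prod_congr rfl (fun a' _ => ?_)
      rw [finSumFinEquiv_apply_left, Fin.append_left]
    · refine Finset.prod_congr rfl (fun b' _ => ?_)
      rw [finSumFinEquiv_apply_right, Fin.append_right]
  have hinner1 : ∀ a : Fin p,
      (∏ j ∈ Finset.Ioi (finSumFinEquiv (Sum.inl a) : Fin (p + q)),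
        (Fin.append t x j - Fin.append t x (finSumFinEquiv (Sum.inl a))))
      = (∏ j ∈ Finset.Ioi a, (t j - t a)) * ∏ b : Fin q, (x b - t a) := by
    intro a
    rw [finSumFinEquiv_apply_left, Fin.append_left, hioi (Fin.castAdd q a) (fun c => c - t a)]
    congr 1
    · have hc : ∀ a' : Fin p,
          (if Fin.castAdd q a < Fin.castAdd q a' then (t a' - t a) else 1)
            = (if a < a' then (t a' - t a) else 1) := by
        intro a'
        refine if_congr ?_ rfl rfl
        rw [Fin.lt_def, Fin.lt_def]
        simp
      rw [Finset.prod_congr rfl (fun a' _ => hc a'), ← Finset.prod_filter]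
      refine Finset.prod_congr ?_ (fun _ _ => rfl)
      ext j; simp
    · refine Finset.prod_congr rfl (fun b' _ => ?_)
      rw [if_pos]
      rw [Fin.lt_def]
      simp only [Fin.coe_castAdd, Fin.coe_natAdd]
      have := a.isLt
      omega
  have hinner2 : ∀ b : Fin q,
      (∏ j ∈ Finset.Ioi (finSumFinEquiv (Sum.inr b) : Fin (p + q)),
        (Fin.append t x j - Fin.append t x (finSumFinEquiv (Sum.inr b))))
      = ∏ j ∈ Finset.Ioi b, (x j - x b) := by
    intro b
    rw [finSumFinEquiv_apply_right, Fin.append_right, hioi (Fin.natAdd p b) (fun c => c - x b)]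
    have hz : (∏ a' : Fin p, if Fin.natAdd p b < Fin.castAdd q a' then (t a' - x b) else 1)
        = 1 := by
      refine Finset.prod_eq_one (fun a' _ => ?_)
      rw [if_neg]
      rw [Fin.lt_def]
      simp only [Fin.coe_castAdd, Fin.coe_natAdd]
      have := a'.isLt
      omega
    rw [hz, one_mul]
    have hc : ∀ b' : Fin q,
        (if Fin.natAdd p b < Fin.natAdd p b' then (x b' - x b) else 1)
          = (if b < b' then (x b' - x b) else 1) := by
      intro b'
      refine if_congr ?_ rfl rfl
      rw [Fin.lt_def, Fin.lt_def]
      simp only [Fin.coe_natAdd]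
      omega
    rw [Finset.prod_congr rfl (fun b' _ => hc b'), ← Finset.prod_filter]
    refine Finset.prod_congr ?_ (fun _ _ => rfl)
    ext j; simp
  rw [Finset.prod_congr rfl (fun a _ => hinner1 a), Finset.prod_congr rfl (fun b _ => hinner2 b),
    Finset.prod_mul_distrib]
  ring

end DC

namespace DC
open Equiv Equiv.Perm

variable {p q : ℕ}

lemma mem_rect {f : Fin p → Fin (q + 1)} :
    f ∈ rect p q ↔ ∀ i j : Fin p, i ≤ j → f j ≤ f i := by
  simp [rect]

def fOf (s : Fin p → Fin (p + q)) : Fin p → Fin (q + 1) :=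
  fun j => ⟨min ((s j.rev : ℕ) - (j.rev : ℕ)) q, by omega⟩

lemma rev_le_rev {i j : Fin p} (h : i ≤ j) : j.rev ≤ i.rev := by
  rw [Fin.le_def, Fin.val_rev, Fin.val_rev]
  rw [Fin.le_def] at h
  have := i.isLt; have := j.isLt
  omega

lemma fOf_mem_rect {s : Fin p → Fin (p + q)} (hs : StrictMono s) : fOf s ∈ rect p q := by
  rw [mem_rect]
  intro i j hij
  rw [Fin.le_def]
  have hrev : (j.rev : ℕ) + ((i.rev : ℕ) - (j.rev : ℕ)) = (i.rev : ℕ) := by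
    have := rev_le_rev hij
    rw [Fin.le_def] at this
    omega
  have hle := sm_le hs ((i.rev : ℕ) - (j.rev : ℕ)) j.rev i.rev hrev
  simp only [fOf]
  omega

lemma fOf_sOf {f : Fin p → Fin (q + 1)} : fOf (sOf f) = f := by
  funext j
  apply Fin.ext
  have h1 : ((sOf f j.rev : Fin (p + q)) : ℕ) = (j.rev : ℕ) + (f j.rev.rev : ℕ) := rfl
  have h2 := (f j).isLt
  simp only [fOf]
  rw [h1, Fin.rev_rev]
  omega

lemma sOf_fOf {s : Fin p → Fin (p + q)} (hs : StrictMono s) : sOf (fOf s) = s := by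
  funext b
  apply Fin.ext
  have h1 : ((sOf (fOf s) b : Fin (p + q)) : ℕ) = (b : ℕ) + ((fOf s b.rev : Fin (q + 1)) : ℕ) :=
    rfl
  have h2 : ((fOf s b.rev : Fin (q + 1)) : ℕ)
      = min ((s b.rev.rev : ℕ) - (b.rev.rev : ℕ)) q := rfl
  rw [h1, h2, Fin.rev_rev]
  have h3 := sm_ge_self hs b
  have h4 := sm_upper hs b
  omega

end DC


open DC

/-- the generalized dual Cauchy identity: for any sequence of monic polynomials
`φ_n` with `deg φ_n = n`,
`∏_{i,j}(t_i - x_j) = ∑_{λ ⊆ (q^p)} (-1)^{|λ̃|} Φ_λ(t) Φ_{λ̃}(x)`. -/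
theorem stmt8 (φ : ℕ → Polynomial ℂ) (hmonic : ∀ n, (φ n).Monic)
    (hdeg : ∀ n, (φ n).natDegree = n)
    (p q : ℕ) (t : Fin p → ℂ) (x : Fin q → ℂ)
    (ht : ∀ i j, i ≠ j → t i ≠ t j) (hx : ∀ i j, i ≠ j → x i ≠ x j) :
    (∏ i, ∏ j, (t i - x j))
      = ∑ f ∈ rect p q,
          (-1 : ℂ) ^ (∑ j : Fin q, tildeP p q (fun i => (f i : ℕ)) j)
            * genSchur φ p (fun i => (f i : ℕ)) t
            * genSchur φ q (tildeP p q (fun i => (f i : ℕ))) x := by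
  have htinj : Function.Injective t := fun i j h => by
    by_contra hne; exact ht i j hne h
  have hxinj : Function.Injective x := fun i j h => by
    by_contra hne; exact hx i j hne h
  have hVt : (Matrix.vandermonde t).det ≠ 0 := Matrix.det_vandermonde_ne_zero_iff.2 htinj
  have hVx : (Matrix.vandermonde x).det ≠ 0 := Matrix.det_vandermonde_ne_zero_iff.2 hxinj
  set z : Fin (p + q) → ℂ := Fin.append t x with hz
  set M' : Matrix (Fin (p + q)) (Fin (p + q)) ℂ :=
    Matrix.of (fun i j => (φ (j : ℕ)).eval (z i)) with hM
  -- the key per-term computation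
  have key : ∀ f ∈ rect p q,
      (-1 : ℂ) ^ (∑ j : Fin q, tildeP p q (fun i => (f i : ℕ)) j)
            * genSchur φ p (fun i => (f i : ℕ)) t
            * genSchur φ q (tildeP p q (fun i => (f i : ℕ))) x
      = (-1 : ℂ) ^ (p * q) / ((Matrix.vandermonde t).det * (Matrix.vandermonde x).det)
        * (((Equiv.Perm.sign (sperm (sOf f)) : ℤ) : ℂ)
           * (M'.submatrix (Fin.castAdd q) (sOf f)).det
           * (M'.submatrix (Fin.natAdd p) (cEnum (sOf f))).det) := by
    intro f hf
    have hant : ∀ i j : Fin p, i ≤ j → f j ≤ f i := mem_rect.1 hf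
    have hmono := sOf_strictMono hant
    -- numerator matrices of the two genSchur factors
    set Dt : Matrix (Fin p) (Fin p) ℂ :=
      Matrix.of (fun a j : Fin p => (φ ((f j : ℕ) + (p - 1 - (j : ℕ)))).eval (t a)) with hDt
    set Dx : Matrix (Fin q) (Fin q) ℂ :=
      Matrix.of (fun a k : Fin q =>
        (φ (tildeP p q (fun i => (f i : ℕ)) k + (q - 1 - (k : ℕ)))).eval (x a)) with hDx
    have hgt : genSchur φ p (fun i => (f i : ℕ)) t
        = Dt.det / (((Equiv.Perm.sign (revE p) : ℤ) : ℂ) * (Matrix.vandermonde t).det) := by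
      rw [genSchur, det_pow_rev]
    have hgx : genSchur φ q (tildeP p q (fun i => (f i : ℕ))) x
        = Dx.det / (((Equiv.Perm.sign (revE q) : ℤ) : ℂ) * (Matrix.vandermonde x).det) := by
      rw [genSchur, det_pow_rev]
    -- the Laplace minors are column-reversals of the numerator matrices
    have hA : M'.submatrix (Fin.castAdd q) (sOf f) = Dt.submatrix id (revE p) := by
      ext a b
      have hzl : z (Fin.castAdd q a) = t a := Fin.append_left t x a
      have he : ((sOf f b : Fin (p + q)) : ℕ) = (f b.rev : ℕ) + (p - 1 - (b.rev : ℕ)) := by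
        have h1 : ((sOf f b : Fin (p + q)) : ℕ) = (b : ℕ) + (f b.rev : ℕ) := rfl
        have h2 := b.isLt
        rw [h1, Fin.val_rev]
        omega
      show (φ ((sOf f b : Fin (p + q)) : ℕ)).eval (z (Fin.castAdd q a))
          = (φ ((f ((revE p) b) : ℕ) + (p - 1 - (((revE p) b : Fin p) : ℕ)))).eval (t a)
      rw [hzl, he]
      rfl
    have hB : M'.submatrix (Fin.natAdd p) (cEnum (sOf f)) = Dx.submatrix id (revE q) := by
      rw [cEnum_sOf hant]
      ext a k
      have hzr : z (Fin.natAdd p a) = x a := Fin.append_right t x a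
      have hkrev : (k.rev : ℕ) = q - ((k : ℕ) + 1) := Fin.val_rev k
      have hkq := k.isLt
      have hconj := conjP_le (fun i => (f i : ℕ)) (k : ℕ)
      have he : ((cOf (fun i => (f i : ℕ)) k : Fin (p + q)) : ℕ)
          = tildeP p q (fun i => (f i : ℕ)) k.rev + (q - 1 - (k.rev : ℕ)) := by
        have h1 : ((cOf (fun i => (f i : ℕ)) k : Fin (p + q)) : ℕ)
            = (k : ℕ) + (p - conjP (fun i => (f i : ℕ)) (k : ℕ)) := rfl
        have h2 : tildeP p q (fun i => (f i : ℕ)) k.rev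
            = p - conjP (fun i => (f i : ℕ)) (k : ℕ) := by
          have harg : q - 1 - (k.rev : ℕ) = (k : ℕ) := by rw [Fin.val_rev]; omega
          rw [tildeP, harg]
        rw [h1, h2]
        omega
      show (φ ((cOf (fun i => (f i : ℕ)) k : Fin (p + q)) : ℕ)).eval (z (Fin.natAdd p a))
          = (φ (tildeP p q (fun i => (f i : ℕ)) ((revE q) k)
              + (q - 1 - (((revE q) k : Fin q) : ℕ)))).eval (x a)
      rw [hzr, he]
      rfl
    have hdA : Dt.det = ((Equiv.Perm.sign (revE p) : ℤ) : ℂ)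
        * (M'.submatrix (Fin.castAdd q) (sOf f)).det := by
      rw [hA, Matrix.det_permute', ← mul_assoc, sign_cast_sq, one_mul]
    have hdB : Dx.det = ((Equiv.Perm.sign (revE q) : ℤ) : ℂ)
        * (M'.submatrix (Fin.natAdd p) (cEnum (sOf f))).det := by
      rw [hB, Matrix.det_permute', ← mul_assoc, sign_cast_sq, one_mul]
    -- signs
    have hsg : ((Equiv.Perm.sign (sperm (sOf f)) : ℤ) : ℂ)
        = (-1 : ℂ) ^ (∑ i : Fin p, (f i : ℕ)) := by
      rw [sign_sperm _ hmono, sum_sOf]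
    have hsum := sum_tildeP (lam := fun i => (f i : ℕ))
      (fun i => by show ((f i : ℕ)) ≤ q; have := (f i).isLt; omega)
    have hts : (-1 : ℂ) ^ (∑ j : Fin q, tildeP p q (fun i => (f i : ℕ)) j)
        = (-1 : ℂ) ^ (p * q) * (-1 : ℂ) ^ (∑ i : Fin p, (f i : ℕ)) := by
      set A := ∑ j : Fin q, tildeP p q (fun i => (f i : ℕ)) j with hAs
      set B := ∑ i : Fin p, (f i : ℕ) with hBs
      have h3 : ((-1 : ℂ) ^ B) * ((-1 : ℂ) ^ B) = 1 := by
        rw [← pow_add, ← two_mul, pow_mul, neg_one_sq, one_pow]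
      have h4 : p * q + B = A + (B + B) := by omega
      calc (-1 : ℂ) ^ A = (-1 : ℂ) ^ A * (((-1 : ℂ) ^ B) * ((-1 : ℂ) ^ B)) := by
            rw [h3, mul_one]
        _ = (-1 : ℂ) ^ (A + (B + B)) := by rw [pow_add, pow_add]
        _ = (-1 : ℂ) ^ (p * q + B) := by rw [h4]
        _ = (-1 : ℂ) ^ (p * q) * (-1 : ℂ) ^ B := by rw [pow_add]
    rw [hgt, hgx, hdA, hdB, hsg, hts]
    rw [mul_div_mul_left _ _ (sign_cast_ne_zero (revE p)),
      mul_div_mul_left _ _ (sign_cast_ne_zero (revE q))]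
    ring
  rw [Finset.sum_congr rfl key, ← Finset.mul_sum]
  have hbij : (∑ f ∈ rect p q,
        (((Equiv.Perm.sign (sperm (sOf f)) : ℤ) : ℂ)
           * (M'.submatrix (Fin.castAdd q) (sOf f)).det
           * (M'.submatrix (Fin.natAdd p) (cEnum (sOf f))).det))
      = ∑ s ∈ SM p (p + q),
        (((Equiv.Perm.sign (sperm s) : ℤ) : ℂ)
           * (M'.submatrix (Fin.castAdd q) s).det
           * (M'.submatrix (Fin.natAdd p) (cEnum s)).det) := by
    refine Finset.sum_nbij' (fun f => sOf f) (fun s => fOf s) ?_ ?_ ?_ ?_ ?_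
    · intro f hf
      exact mem_SM.2 (sOf_strictMono (mem_rect.1 hf))
    · intro s hs
      exact fOf_mem_rect (mem_SM.1 hs)
    · intro f _
      exact fOf_sOf
    · intro s hs
      exact sOf_fOf (mem_SM.1 hs)
    · intro f _
      rfl
  rw [hbij, ← laplace M']
  have hdetM : M'.det = (Matrix.vandermonde z).det := by
    rw [hM]
    exact (Matrix.det_eval_matrixOfPolynomials_eq_det_vandermonde z (fun j => φ (j : ℕ))
      (fun j => hdeg (j : ℕ)) (fun j => hmonic (j : ℕ))).symm
  rw [hdetM, hz, vdm_append t x]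
  have hflip : (∏ a : Fin p, ∏ b : Fin q, (x b - t a))
      = (-1 : ℂ) ^ (p * q) * ∏ i : Fin p, ∏ j : Fin q, (t i - x j) := by
    have h1 : ∀ a : Fin p, (∏ b : Fin q, (x b - t a))
        = (-1 : ℂ) ^ q * ∏ b : Fin q, (t a - x b) := by
      intro a
      have h2 : ∀ b : Fin q, x b - t a = (-1 : ℂ) * (t a - x b) := fun b => by ring
      rw [Finset.prod_congr rfl (fun b _ => h2 b), Finset.prod_mul_distrib,
        Finset.prod_const, Finset.card_univ]
      simp
    rw [Finset.prod_congr rfl (fun a _ => h1 a), Finset.prod_mul_distrib, Finset.prod_const,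
      Finset.card_univ]
    simp only [Fintype.card_fin]
    rw [← pow_mul, mul_comm q p]
  rw [hflip]
  have hsq : (-1 : ℂ) ^ (p * q) * (-1 : ℂ) ^ (p * q) = 1 := by
    rw [← pow_add, ← two_mul, pow_mul, neg_one_sq, one_pow]
  have hne : (Matrix.vandermonde t).det * (Matrix.vandermonde x).det ≠ 0 :=
    mul_ne_zero hVt hVx
  rw [div_mul_eq_mul_div, eq_div_iff hne]
  calc (∏ i : Fin p, ∏ j : Fin q, (t i - x j))
        * ((Matrix.vandermonde t).det * (Matrix.vandermonde x).det)
      = ((-1 : ℂ) ^ (p * q) * (-1 : ℂ) ^ (p * q))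
          * ((∏ i : Fin p, ∏ j : Fin q, (t i - x j))
            * ((Matrix.vandermonde t).det * (Matrix.vandermonde x).det)) := by
        rw [hsq, one_mul]
    _ = (-1 : ℂ) ^ (p * q) *
          ((Matrix.vandermonde t).det * (Matrix.vandermonde x).det
            * ((-1 : ℂ) ^ (p * q) * ∏ i : Fin p, ∏ j : Fin q, (t i - x j))) := by
        ring
end

section
/- Combinatorial permutation fact: for a partition λ with λ_1 ≤ q and λ'_1 ≤ p, the p+q numbers λ_i + p - i for 1 ≤ i ≤ p together with p - 1 + j - λ'_j for 1 ≤ j ≤ q form a permutation of {0, 1, ..., p+q-1}. -/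
open Finset

lemma conjP_le_p {p : ℕ} (lam : Fin p → ℕ) (j : ℕ) : conjP lam j ≤ p := by
  classical
  calc conjP lam j ≤ (Finset.univ : Finset (Fin p)).card := Finset.card_filter_le _ _
  _ = p := by simp

lemma conjP_antitone {p : ℕ} (lam : Fin p → ℕ) : Antitone (conjP lam) := by
  intro j j' h
  apply Finset.card_le_card
  intro i hi
  simp only [Finset.mem_filter, Finset.mem_univ, true_and] at hi ⊢
  omega

lemma lt_conjP_iff {p : ℕ} (lam : Fin p → ℕ) (hA : Antitone lam) (i : Fin p) (j : ℕ) :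
    (i : ℕ) < conjP lam j ↔ j < lam i := by
  classical
  constructor
  · intro h
    by_contra hle
    push_neg at hle
    have hsub : (Finset.univ.filter fun i' : Fin p => j < lam i') ⊆
        Finset.univ.filter fun i' : Fin p => (i' : ℕ) < (i : ℕ) := by
      intro i' hi'
      simp only [Finset.mem_filter, Finset.mem_univ, true_and] at hi' ⊢
      by_contra hge
      push_neg at hge
      have : lam i' ≤ lam i := hA (by exact Fin.le_def.mpr hge)
      omega
    have hcard := Finset.card_le_card hsub
    have : (Finset.univ.filter fun i' : Fin p => (i' : ℕ) < (i : ℕ)).card ≤ (i : ℕ) := by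
      have hinj : Set.InjOn (fun i' : Fin p => (i' : ℕ))
          ↑(Finset.univ.filter fun i' : Fin p => (i' : ℕ) < (i : ℕ)) := by
        intro a _ b _ hab; exact Fin.ext hab
      have := Finset.card_image_of_injOn hinj
      have hsub2 : Finset.image (fun i' : Fin p => (i' : ℕ))
          (Finset.univ.filter fun i' : Fin p => (i' : ℕ) < (i : ℕ)) ⊆ Finset.range (i : ℕ) := by
        intro x hx
        simp only [Finset.mem_image, Finset.mem_filter, Finset.mem_univ, true_and,
          Finset.mem_range] at hx ⊢
        obtain ⟨a, ha, rfl⟩ := hx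
        exact ha
      have := Finset.card_le_card hsub2
      simp only [Finset.card_image_of_injOn hinj] at this ⊢
      simpa using this
    unfold conjP at h
    omega
  · intro h
    have hsub : Finset.Iic i ⊆ Finset.univ.filter fun i' : Fin p => j < lam i' := by
      intro i' hi'
      simp only [Finset.mem_Iic] at hi'
      simp only [Finset.mem_filter, Finset.mem_univ, true_and]
      exact lt_of_lt_of_le h (hA hi')
    have := Finset.card_le_card hsub
    have hIic : (Finset.Iic i).card = (i : ℕ) + 1 := by
      simp [Fin.card_Iic]
    unfold conjP
    omega

/-- for a partition `λ` inside a `p × q` rectangle, the `p + q` numbers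
`λ_i + p - i` (for `1 ≤ i ≤ p`) together with `p - 1 + j - λ'_j` (for `1 ≤ j ≤ q`) form a
permutation of `{0, 1, …, p+q-1}`. -/
theorem stmt9 (p q : ℕ) (lam : Fin p → ℕ) (hA : Antitone lam) (hq : ∀ i, lam i ≤ q) :
    Function.Injective
        (Sum.elim (fun i : Fin p => lam i + (p - 1 - (i : ℕ)))
          (fun j : Fin q => p + (j : ℕ) - conjP lam (j : ℕ))) ∧
    Finset.image
        (Sum.elim (fun i : Fin p => lam i + (p - 1 - (i : ℕ)))
          (fun j : Fin q => p + (j : ℕ) - conjP lam (j : ℕ)))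
        (Finset.univ : Finset (Fin p ⊕ Fin q))
      = Finset.range (p + q) := by
  classical
  have hne : ∀ (i : Fin p) (j : Fin q),
      lam i + (p - 1 - (i : ℕ)) ≠ p + (j : ℕ) - conjP lam (j : ℕ) := by
    intro i j
    have hcle := conjP_le_p lam (j : ℕ)
    have hip : (i : ℕ) < p := i.isLt
    rcases lt_or_ge (j : ℕ) (lam i) with h | h
    · have := (lt_conjP_iff lam hA i (j : ℕ)).mpr h
      omega
    · have := (lt_conjP_iff lam hA i (j : ℕ)).not.mpr (by omega)
      omega
  have hinj : Function.Injective
      (Sum.elim (fun i : Fin p => lam i + (p - 1 - (i : ℕ)))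
        (fun j : Fin q => p + (j : ℕ) - conjP lam (j : ℕ))) := by
    intro a b hab
    match a, b with
    | Sum.inl i, Sum.inl i' =>
      simp only [Sum.elim_inl] at hab
      rcases lt_trichotomy i i' with h | h | h
      · exfalso
        have h1 : lam i' ≤ lam i := hA h.le
        have := i'.isLt
        have := Fin.lt_def.mp h
        omega
      · exact congrArg Sum.inl h
      · exfalso
        have h1 : lam i ≤ lam i' := hA h.le
        have := i.isLt
        have := Fin.lt_def.mp h
        omega
    | Sum.inl i, Sum.inr j => exact absurd hab (hne i j)
    | Sum.inr j, Sum.inl i => exact absurd hab.symm (hne i j)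
    | Sum.inr j, Sum.inr j' =>
      simp only [Sum.elim_inr] at hab
      rcases lt_trichotomy j j' with h | h | h
      · exfalso
        have h1 : conjP lam (j' : ℕ) ≤ conjP lam (j : ℕ) :=
          conjP_antitone lam (le_of_lt (Fin.lt_def.mp h))
        have h2 := conjP_le_p lam (j : ℕ)
        have := Fin.lt_def.mp h
        omega
      · exact congrArg Sum.inr h
      · exfalso
        have h1 : conjP lam (j : ℕ) ≤ conjP lam (j' : ℕ) :=
          conjP_antitone lam (le_of_lt (Fin.lt_def.mp h))
        have h2 := conjP_le_p lam (j' : ℕ)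
        have := Fin.lt_def.mp h
        omega
  refine ⟨hinj, ?_⟩
  apply Finset.eq_of_subset_of_card_le
  · intro x hx
    simp only [Finset.mem_image, Finset.mem_univ, true_and] at hx
    obtain ⟨a, rfl⟩ := hx
    simp only [Finset.mem_range]
    match a with
    | Sum.inl i =>
      have := i.isLt
      have := hq i
      simp only [Sum.elim_inl]
      omega
    | Sum.inr j =>
      have := j.isLt
      simp only [Sum.elim_inr]
      omega
  · rw [Finset.card_range, Finset.card_image_of_injective _ hinj]
    simp
end
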